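/- Let G be a group with elements g₂,…,g₅ and integers t₂₃₄, t₂₃₅, t₂₄₅, t₃₄₅ satisfying the listed commutator relations. Then for all integers a₂,…,a₅ and every natural number x: (g₂^{a₂}g₃^{a₃}g₄^{a₄}g₅^{a₅})^x = g₂^{k₂}g₃^{k₃}g₄^{k₄}g₅^{k₅}, where k₂ = x·a₂, k₃ = x·a₃, k₄ = x·a₄ + s₂(x)·a₂a₃t₂₃₄, and k₅ = x·a₅ + s₂(x)(a₂a₃t₂₃₅ + a₂a₄t₂₄₅ + a₃a₄t₃₄₅) + s₂(x)·a₂a₃t₂₃₄·(t₂₄₅((2x−1)a₂ − 3) + t₃₄₅((4x+1)a₃ − 3))/6. -/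

import Mathlib

/-!
Collection in the class-three group `⟨g₂, g₃, g₄, g₅⟩`. Conjugation by `g₂` maps a collected word
`g₃^B g₄^K g₅^E` of the class-two subgroup `⟨g₃, g₄, g₅⟩` to a collected word whose exponents are
polynomial in `(B, K, E)`, and the `n`-th iterate of this map is again explicit for every `n : ℤ`.
This gives a multiplication law for collected words `g₂^A g₃^B g₄^C g₅^D`, and the power formula
follows by induction on `x`. The `t₂₃₄`-part of `k₅` is `6` times an integer combination of
`s₂(x)`, `(x choose 3)`, `s₂(a₂)` and `s₂(a₃)`, which is why the division by `6` is exact.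
-/

def s2 (x : ℤ) : ℤ := x * (x - 1) / 2

theorem cast_s2 {K : Type*} [DivisionRing K] [CharZero K] (y : ℤ) :
    (s2 y : K) = y * (y - 1) / 2 := by
  rw [s2, Int.cast_div (Int.even_mul_pred_self y).two_dvd (by norm_num)]
  push_cast; rfl

theorem s2_zero : s2 0 = 0 := rfl

theorem s2_add_one (y : ℤ) : s2 (y + 1) = s2 y + y := by
  apply Int.cast_injective (α := ℚ)
  push_cast [cast_s2]
  ring

theorem Nat.cast_choose_three {K : Type*} [Field K] [CharZero K] (n : ℕ) :
    (n.choose 3 : K) = n * (n - 1) * (n - 2) / 6 := by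
  induction n with
  | zero => simp
  | succ n ih =>
    rw [Nat.choose_succ_succ, Nat.cast_add, ih, Nat.cast_choose_two]
    push_cast; ring

/-- The `t₂₃₄`-part of `k₅`, written without the division by `6`. -/
def powerCorrection (u s t a2 a3 : ℤ) (n : ℕ) : ℤ :=
  u * (s * a3 * (s2 n * s2 a2 + a2 ^ 2 * n.choose 3)
    + t * a2 * (2 * a3 ^ 2 * n.choose 3 + s2 n * s2 a3 + a3 ^ 2 * s2 n))

theorem powerCorrection_succ (u s t a2 a3 : ℤ) (n : ℕ) :
    powerCorrection u s t a2 a3 (n + 1) = powerCorrection u s t a2 a3 n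
      + s * (a2 * (s2 n * a2 * a3 * u) + s2 a2 * (n * a3 * u))
      + t * (s2 (n * a3) * u * a2 + (s2 n * a2 * a3 * u + a2 * (n * a3 * u)) * a3) := by
  apply Int.cast_injective (α := ℚ)
  push_cast [powerCorrection, cast_s2, Nat.cast_choose_three]
  ring

theorem s2_mul_eq_six_mul_powerCorrection (x : ℕ) (a2 a3 t234 t245 t345 : ℤ) :
    s2 x * a2 * a3 * t234 * (t245 * ((2 * x - 1) * a2 - 3) + t345 * ((4 * x + 1) * a3 - 3))
      = 6 * powerCorrection t234 t245 t345 a2 a3 x := by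
  apply Int.cast_injective (α := ℚ)
  push_cast [powerCorrection, cast_s2, Nat.cast_choose_three]
  ring

section ZPow

variable {G : Type*} [Group G]

theorem eq_mul_zpow_of_succ {F : ℤ → G} {g : G} (h : ∀ n, F (n + 1) = F n * g) (n : ℤ) :
    F n = F 0 * g ^ n := by
  induction n using Int.induction_on with
  | zero => simp
  | succ i ih => rw [h, ih, mul_assoc, zpow_add_one]
  | pred i ih =>
    have := h (-i - 1)
    rw [sub_add_cancel] at this
    rw [eq_mul_inv_of_mul_eq this.symm, ih, mul_assoc, zpow_sub_one]

theorem zpow_neg_mul_mul_zpow_of_succ {F : ℤ → G} {g : G} (h : ∀ n, F (n + 1) = g⁻¹ * F n * g)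
    (n : ℤ) : g ^ (-n) * F 0 * g ^ n = F n := by
  have key := eq_mul_zpow_of_succ (F := fun n ↦ g ^ n * F n) (g := g) fun n ↦ by
    simp only [h, zpow_add_one]; group
  simp only [zpow_zero, one_mul] at key
  rw [mul_assoc, ← key, ← mul_assoc, zpow_neg, inv_mul_cancel, one_mul]

theorem inv_mul_zpow_mul (a b : G) (m : ℤ) : b⁻¹ * a ^ m * b = (b⁻¹ * a * b) ^ m := by
  simpa using (conj_zpow (a := b⁻¹) (b := a) (i := m)).symm

theorem commute_of_inv_mul_inv_mul_mul_eq_one {a b : G} (h : a⁻¹ * b⁻¹ * a * b = 1) :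
    Commute a b := by
  rwa [← Commute.inv_inv_iff, ← commutatorElement_eq_one_iff_commute, commutatorElement_def,
    inv_inv, inv_inv]

theorem inv_mul_mul_eq_mul_of_inv_mul_inv_mul_mul_eq {a b c : G} (h : a⁻¹ * b⁻¹ * a * b = c) :
    b⁻¹ * a * b = a * c := by
  rw [← h]; group

theorem zpow_mul_zpow_eq_of_inv_mul_mul_eq {a b c : G} (h : b⁻¹ * a * b = a * c)
    (hac : Commute a c) (hbc : Commute b c) (m n : ℤ) :
    a ^ m * b ^ n = b ^ n * a ^ m * c ^ (m * n) := by
  have conj := zpow_neg_mul_mul_zpow_of_succ (F := fun n ↦ a ^ m * c ^ (m * n)) (g := b)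
    fun n ↦ calc
      a ^ m * c ^ (m * (n + 1)) = (a * c) ^ m * c ^ (m * n) := by
        rw [hac.mul_zpow, mul_assoc, ← zpow_add]; ring_nf
      _ = (b⁻¹ * a ^ m * b) * (b⁻¹ * c ^ (m * n) * b) := by
        rw [inv_mul_zpow_mul, h, (hbc.zpow_right _).inv_mul_cancel]
      _ = b⁻¹ * (a ^ m * c ^ (m * n)) * b := by group
  simp only [mul_zero, zpow_zero, mul_one] at conj
  calc a ^ m * b ^ n = b ^ n * (b ^ (-n) * a ^ m * b ^ n) := by group
    _ = b ^ n * a ^ m * c ^ (m * n) := by rw [conj, mul_assoc]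

end ZPow

section Collection

variable {G : Type*} [Group G] {x y z : G} {t : ℤ}

theorem collected_mul_collected (hxy : x⁻¹ * y * x = y * z ^ t) (hxz : Commute x z)
    (hyz : Commute y z) (B K E b k e : ℤ) :
    x ^ B * y ^ K * z ^ E * (x ^ b * y ^ k * z ^ e)
      = x ^ (B + b) * y ^ (K + k) * z ^ (E + e + t * K * b) := by
  have swap := zpow_mul_zpow_eq_of_inv_mul_mul_eq hxy (hyz.zpow_right t) (hxz.zpow_right t) K b
  have hz : Commute (z ^ E) (x ^ b * y ^ k) :=
    ((hxz.zpow_zpow b E).mul_left (hyz.zpow_zpow k E)).symm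
  calc x ^ B * y ^ K * z ^ E * (x ^ b * y ^ k * z ^ e)
      = x ^ B * y ^ K * (z ^ E * (x ^ b * y ^ k)) * z ^ e := by group
    _ = x ^ B * (y ^ K * x ^ b) * y ^ k * z ^ E * z ^ e := by rw [hz.eq]; group
    _ = x ^ B * (x ^ b * y ^ K * (z ^ t) ^ (K * b)) * y ^ k * z ^ E * z ^ e := by rw [swap]
    _ = x ^ (B + b) * y ^ K * ((z ^ t) ^ (K * b) * y ^ k) * z ^ E * z ^ e := by group
    _ = x ^ (B + b) * y ^ K * (y ^ k * (z ^ t) ^ (K * b)) * z ^ E * z ^ e := by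
      rw [((hyz.zpow_right t).zpow_zpow k (K * b)).eq]
    _ = x ^ (B + b) * y ^ (K + k) * z ^ (E + e + t * K * b) := by group

theorem collected_zpow (hxy : x⁻¹ * y * x = y * z ^ t) (hxz : Commute x z)
    (hyz : Commute y z) (b k e m : ℤ) :
    (x ^ b * y ^ k * z ^ e) ^ m
      = x ^ (m * b) * y ^ (m * k) * z ^ (m * e + s2 m * (t * k * b)) := by
  have h := eq_mul_zpow_of_succ
    (F := fun m ↦ x ^ (m * b) * y ^ (m * k) * z ^ (m * e + s2 m * (t * k * b)))
    (g := x ^ b * y ^ k * z ^ e) (fun m ↦ by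
      rw [collected_mul_collected hxy hxz hyz, s2_add_one]; ring_nf) m
  simpa [s2_zero] using h.symm

variable {w : G} {u v s : ℤ}

theorem conj_collected (hxy : x⁻¹ * y * x = y * z ^ t) (hxz : Commute x z) (hyz : Commute y z)
    (hwx : w⁻¹ * x * w = x * (y ^ u * z ^ v)) (hwy : w⁻¹ * y * w = y * z ^ s) (hwz : Commute w z)
    (B K E : ℤ) :
    w⁻¹ * (x ^ B * y ^ K * z ^ E) * w
      = x ^ B * y ^ (K + B * u) * z ^ (E + B * v + s2 B * (t * u) + s * K) := by
  have hx : x * (y ^ u * z ^ v) = x ^ (1 : ℤ) * y ^ u * z ^ v := by rw [zpow_one, mul_assoc]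
  calc w⁻¹ * (x ^ B * y ^ K * z ^ E) * w
      = (w⁻¹ * x ^ B * w) * (w⁻¹ * y ^ K * w) * (w⁻¹ * z ^ E * w) := by group
    _ = (x * (y ^ u * z ^ v)) ^ B * (y * z ^ s) ^ K * z ^ E := by
      rw [inv_mul_zpow_mul, inv_mul_zpow_mul, inv_mul_zpow_mul, hwx, hwy, hwz.inv_mul_cancel]
    _ = x ^ B * y ^ (B * u) * z ^ (B * v + s2 B * (t * u)) * (y ^ K * (z ^ s) ^ K) * z ^ E := by
      rw [hx, collected_zpow hxy hxz hyz, (hyz.zpow_right s).mul_zpow, mul_one, mul_one]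
    _ = x ^ B * y ^ (B * u) * (z ^ (B * v + s2 B * (t * u)) * y ^ K) * (z ^ s) ^ K * z ^ E := by
      group
    _ = x ^ B * y ^ (B * u) * (y ^ K * z ^ (B * v + s2 B * (t * u))) * (z ^ s) ^ K * z ^ E := by
      rw [← (hyz.zpow_zpow K _).eq]
    _ = x ^ B * y ^ (K + B * u) * z ^ (E + B * v + s2 B * (t * u) + s * K) := by group

theorem zpow_neg_mul_collected_mul_zpow (hxy : x⁻¹ * y * x = y * z ^ t) (hxz : Commute x z)
    (hyz : Commute y z) (hwx : w⁻¹ * x * w = x * (y ^ u * z ^ v))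
    (hwy : w⁻¹ * y * w = y * z ^ s) (hwz : Commute w z) (n B K E : ℤ) :
    w ^ (-n) * (x ^ B * y ^ K * z ^ E) * w ^ n
      = x ^ B * y ^ (K + n * (B * u))
        * z ^ (E + n * (B * v + s2 B * (t * u)) + s * (n * K + s2 n * (B * u))) := by
  have h := zpow_neg_mul_mul_zpow_of_succ (g := w) (F := fun n ↦ x ^ B * y ^ (K + n * (B * u))
      * z ^ (E + n * (B * v + s2 B * (t * u)) + s * (n * K + s2 n * (B * u)))) (fun n ↦ by
    rw [conj_collected hxy hxz hyz hwx hwy hwz, s2_add_one]; ring_nf) n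
  simpa [s2_zero] using h

theorem collected_mul_collected_of_conj (hxy : x⁻¹ * y * x = y * z ^ t) (hxz : Commute x z)
    (hyz : Commute y z) (hwx : w⁻¹ * x * w = x * (y ^ u * z ^ v))
    (hwy : w⁻¹ * y * w = y * z ^ s) (hwz : Commute w z) (A B C D a b c d : ℤ) :
    w ^ A * x ^ B * y ^ C * z ^ D * (w ^ a * x ^ b * y ^ c * z ^ d)
      = w ^ (A + a) * x ^ (B + b) * y ^ (C + a * (B * u) + c)
        * z ^ (D + a * (B * v + s2 B * (t * u)) + s * (a * C + s2 a * (B * u)) + d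
          + t * (C + a * (B * u)) * b) := by
  calc w ^ A * x ^ B * y ^ C * z ^ D * (w ^ a * x ^ b * y ^ c * z ^ d)
      = w ^ (A + a) * ((w ^ (-a) * (x ^ B * y ^ C * z ^ D) * w ^ a)
          * (x ^ b * y ^ c * z ^ d)) := by group
    _ = _ := by
      rw [zpow_neg_mul_collected_mul_zpow hxy hxz hyz hwx hwy hwz,
        collected_mul_collected hxy hxz hyz]
      group

theorem collected_pow (hxy : x⁻¹ * y * x = y * z ^ t) (hxz : Commute x z)
    (hyz : Commute y z) (hwx : w⁻¹ * x * w = x * (y ^ u * z ^ v))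
    (hwy : w⁻¹ * y * w = y * z ^ s) (hwz : Commute w z) (a2 a3 a4 a5 : ℤ) (n : ℕ) :
    (w ^ a2 * x ^ a3 * y ^ a4 * z ^ a5) ^ n
      = w ^ ((n : ℤ) * a2) * x ^ ((n : ℤ) * a3) * y ^ ((n : ℤ) * a4 + s2 n * a2 * a3 * u)
        * z ^ ((n : ℤ) * a5 + s2 n * (a2 * a3 * v + a2 * a4 * s + a3 * a4 * t)
          + powerCorrection u s t a2 a3 n) := by
  induction n with
  | zero => simp [s2_zero, powerCorrection]
  | succ n ih =>
    rw [pow_succ, ih, collected_mul_collected_of_conj hxy hxz hyz hwx hwy hwz]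
    congrm w ^ ?_ * x ^ ?_ * y ^ ?_ * z ^ ?_
    · push_cast; ring
    · push_cast; ring
    · push_cast; rw [s2_add_one]; ring
    · push_cast; rw [s2_add_one, powerCorrection_succ]; ring

end Collection

/-- Powering polynomials `k₂,…,k₅` for the subgroup `G₂ = ⟨g₂,…,g₅⟩`:
`(g₂^{a₂}g₃^{a₃}g₄^{a₄}g₅^{a₅})^x = g₂^{k₂}g₃^{k₃}g₄^{k₄}g₅^{k₅}` for natural `x`.
The division by `6` in `k₅` is exact. -/
theorem powering_polynomials_G2 (G : Type*) [Group G] (g2 g3 g4 g5 : G)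
    (t234 t235 t245 t345 : ℤ)
    (h32 : g3⁻¹ * g2⁻¹ * g3 * g2 = g4 ^ t234 * g5 ^ t235)
    (h42 : g4⁻¹ * g2⁻¹ * g4 * g2 = g5 ^ t245)
    (h43 : g4⁻¹ * g3⁻¹ * g4 * g3 = g5 ^ t345)
    (h52 : g5⁻¹ * g2⁻¹ * g5 * g2 = 1)
    (h53 : g5⁻¹ * g3⁻¹ * g5 * g3 = 1)
    (h54 : g5⁻¹ * g4⁻¹ * g5 * g4 = 1) :
    ∀ (a2 a3 a4 a5 : ℤ) (x : ℕ),
      (g2 ^ a2 * g3 ^ a3 * g4 ^ a4 * g5 ^ a5) ^ x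
        = g2 ^ ((x : ℤ) * a2) * g3 ^ ((x : ℤ) * a3)
            * g4 ^ ((x : ℤ) * a4 + s2 (x : ℤ) * a2 * a3 * t234)
            * g5 ^ ((x : ℤ) * a5
                    + s2 (x : ℤ) * (a2 * a3 * t235 + a2 * a4 * t245 + a3 * a4 * t345)
                    + s2 (x : ℤ) * a2 * a3 * t234
                        * (t245 * ((2 * (x : ℤ) - 1) * a2 - 3)
                           + t345 * ((4 * (x : ℤ) + 1) * a3 - 3)) / 6) := by
  intro a2 a3 a4 a5 x
  rw [collected_pow (inv_mul_mul_eq_mul_of_inv_mul_inv_mul_mul_eq h43)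
      (commute_of_inv_mul_inv_mul_mul_eq_one h53).symm
      (commute_of_inv_mul_inv_mul_mul_eq_one h54).symm
      (inv_mul_mul_eq_mul_of_inv_mul_inv_mul_mul_eq h32)
      (inv_mul_mul_eq_mul_of_inv_mul_inv_mul_mul_eq h42)
      (commute_of_inv_mul_inv_mul_mul_eq_one h52).symm,
    s2_mul_eq_six_mul_powerCorrection, Int.mul_ediv_cancel_left _ (by norm_num)]
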